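/- arXiv:1908.04273 — 2 statements merged into one kernel-verified Lean document; each statement's English description precedes it below -/
import Mathlib

section
/- Assume the closures of F(w) and F(w') are disjoint for all distinct words w, w' of equal length. Then the similarity map φ is topologically transitive on 𝓕: there exists a point x ∈ 𝓕 whose forward orbit {φⁿ(x) : n ∈ ℕ} is dense in 𝓕. -/
/-! Writing every finite word somewhere into one coding sequence `i`, the shifts of `i` visit
every cylinder, so the orbit of `π i` meets every cylinder; since the cylinders of a fixed
level cover the fractal and have uniformly small diameter, this orbit is dense. -/

open Filter Set Metric Topology

/-- The length-`n` prefix word `(i 0, i 1, ..., i (n-1))` of an infinite sequence `i`. -/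
def wordPrefix {m : ℕ} (i : ℕ → Fin m) (n : ℕ) : List (Fin m) :=
  (List.range n).map i

@[simp]
lemma length_wordPrefix {m : ℕ} (i : ℕ → Fin m) (n : ℕ) : (wordPrefix i n).length = n := by
  simp [wordPrefix]

lemma exists_seq_forall_list_exists_shift (α : Type*) [Countable α] [Nonempty α] :
    ∃ x : ℕ → α, ∀ w : List α, ∃ s, (List.range w.length).map (fun n => x (n + s)) = w := by
  obtain ⟨f, hf⟩ := exists_surjective_nat (List α)
  obtain ⟨d⟩ := ‹Nonempty α›
  -- The `k`-th block `[2 ^ k, 2 ^ (k + 1))` spells the word `f k.unpair.1`; for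
  -- `k = pair a (f a).length` the block is long enough to hold all of `f a`.
  refine ⟨fun n => (f (Nat.log 2 n).unpair.1).getD (n - 2 ^ Nat.log 2 n) d, fun w => ?_⟩
  obtain ⟨a, rfl⟩ := hf w
  set k := Nat.pair a (f a).length
  refine ⟨2 ^ k, List.ext_getElem (by simp) fun t ht hta => ?_⟩
  have htk : t < 2 ^ k := by
    simp only [List.length_map, List.length_range] at ht
    exact ht.trans_le ((Nat.right_le_pair _ _).trans Nat.lt_two_pow_self.le)
  have hlog : Nat.log 2 (t + 2 ^ k) = k :=
    (Nat.log_eq_iff (by simp)).2 ⟨by omega, by rw [pow_succ]; omega⟩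
  simp [hlog, k, Nat.unpair_pair, List.getElem?_eq_getElem hta]

lemma iterate_shift {α : Type*} (x : ℕ → α) (s : ℕ) :
    (fun x : ℕ → α => fun n => x (n + 1))^[s] x = fun n => x (n + s) := by
  induction s generalizing x with
  | zero => rfl
  | succ s ih => rw [Function.iterate_succ_apply, ih]; rfl

lemma dist_le_iSup_diam_of_mem_closure {X ι : Type*} [PseudoMetricSpace X] [BoundedSpace X]
    {F : ι → Set X} {x y : X} (i : ι) (hx : x ∈ closure (F i)) (hy : y ∈ closure (F i)) :
    dist x y ≤ ⨆ j, diam (F j) := by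
  have hbdd : BddAbove (range fun j => diam (F j)) :=
    ⟨diam (univ : Set X), forall_mem_range.2 fun j =>
      diam_mono (subset_univ _) BoundedSpace.bounded_univ⟩
  calc dist x y ≤ diam (closure (F i)) :=
        dist_le_diam_of_mem (BoundedSpace.bounded_univ.subset (subset_univ _)) hx hy
    _ = diam (F i) := diam_closure _
    _ ≤ ⨆ j, diam (F j) := le_ciSup hbdd i

theorem abstract_fractal_similarity_map_transitive_general
    {X : Type*} [MetricSpace X] [CompactSpace X] {m : ℕ} (hm : 2 ≤ m)
    (F : List (Fin m) → Set X)
    (hdiam : Tendsto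
      (fun n => ⨆ w : {w : List (Fin m) // w.length = n}, Metric.diam (F w.1))
      atTop (𝓝 0))
    (π : (ℕ → Fin m) → X)
    (hπ : ∀ i : ℕ → Fin m, (⋂ n : ℕ, closure (F (wordPrefix i n))) = {π i})
    (φ : Set.range π → Set.range π)
    (hφ : ∀ i : ℕ → Fin m,
      (φ ⟨π i, Set.mem_range_self i⟩ : X) = π (fun n => i (n + 1))) :
    ∃ x : Set.range π, Dense (Set.range fun n : ℕ => φ^[n] x) := by
  have : NeZero m := ⟨by omega⟩
  have hcyl (i : ℕ → Fin m) (n : ℕ) : π i ∈ closure (F (wordPrefix i n)) :=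
    mem_iInter.1 ((hπ i).symm ▸ mem_singleton (π i)) n
  have hsemiconj : Function.Semiconj (fun i => (⟨π i, mem_range_self i⟩ : range π))
      (fun i => fun n => i (n + 1)) φ := fun i => Subtype.ext (hφ i).symm
  obtain ⟨i, hi⟩ := exists_seq_forall_list_exists_shift (Fin m)
  refine ⟨⟨π i, mem_range_self i⟩, Metric.denseRange_iff.2 ?_⟩
  rintro ⟨y, hy⟩ ε hε
  obtain ⟨j, rfl⟩ := hy
  obtain ⟨N, hN⟩ := (hdiam.eventually (gt_mem_nhds hε)).exists
  obtain ⟨s, hs⟩ := hi (wordPrefix j N)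
  refine ⟨s, ?_⟩
  have hprefix : wordPrefix (fun n => i (n + s)) N = wordPrefix j N := by
    rw [length_wordPrefix] at hs
    exact hs
  have hmem : π (fun n => i (n + s)) ∈ closure (F (wordPrefix j N)) := hprefix ▸ hcyl _ N
  rw [← hsemiconj.iterate_right s i, iterate_shift, Subtype.dist_eq]
  exact (dist_le_iSup_diam_of_mem_closure (F := fun w : {w // w.length = N} => F w.1)
    ⟨wordPrefix j N, length_wordPrefix j N⟩ (hcyl j N) hmem).trans_lt hN

/-- The similarity map `φ` is topologically transitive on the abstract fractal: some point has
dense forward orbit. -/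
theorem abstract_fractal_similarity_map_transitive
    {X : Type*} [MetricSpace X] [CompactSpace X] {m : ℕ} (hm : 2 ≤ m)
    (F : List (Fin m) → Set X)
    (hne : ∀ w : List (Fin m), (F w).Nonempty)
    (hnest : ∀ (w : List (Fin m)) (j : Fin m), F (w ++ [j]) ⊆ F w)
    (hdiam : Tendsto
      (fun n => ⨆ w : {w : List (Fin m) // w.length = n}, Metric.diam (F w.1))
      atTop (𝓝 0))
    (π : (ℕ → Fin m) → X)
    (hπ : ∀ i : ℕ → Fin m, (⋂ n : ℕ, closure (F (wordPrefix i n))) = {π i})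
    (hdisj : ∀ w w' : List (Fin m), w.length = w'.length → w ≠ w' →
      Disjoint (closure (F w)) (closure (F w')))
    (φ : Set.range π → Set.range π)
    (hφ : ∀ i : ℕ → Fin m,
      (φ ⟨π i, Set.mem_range_self i⟩ : X) = π (fun n => i (n + 1))) :
    ∃ x : Set.range π, Dense (Set.range fun n : ℕ => φ^[n] x) :=
  abstract_fractal_similarity_map_transitive_general hm F hdiam π hπ φ hφ
end

section
/- The shift map σ on the full shift space Σ = (ℕ → Fin m) is Li–Yorke chaotic: there exists an uncountable set S ⊆ Σ such that for all distinct x, y ∈ S, liminf_{k→∞} dist(σᵏ(x), σᵏ(y)) = 0 and limsup_{k→∞} dist(σᵏ(x), σᵏ(y)) ≥ 1. -/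
open Filter Set Topology

/-- The shift map `σ` on the sequence space `ℕ → Fin m`, `(σ x) n = x (n + 1)`. -/
def shiftMap {m : ℕ} : (ℕ → Fin m) → (ℕ → Fin m) := fun x n => x (n + 1)

/-- The metric on the full shift space `ℕ → Fin m`: `dist x y = (1/2) ^ n₀`, where `n₀` is the
first index at which `x` and `y` differ (and `dist x x = 0`). It induces the product topology. -/
noncomputable local instance shiftMetric (m : ℕ) : MetricSpace (ℕ → Fin m) :=
  PiNat.metricSpace

/-- Auxiliary scrambled sequence associated to a boolean sequence `a`. -/
def LYseq (m : ℕ) (hm : 2 ≤ m) (a : ℕ → Bool) : ℕ → Fin m := fun n =>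
  if 2 ^ Nat.log2 n = n ∧ a (Nat.unpair (Nat.log2 n)).1 = true then
    ⟨1, by omega⟩ else ⟨0, by omega⟩

lemma LYseq_pow (m : ℕ) (hm : 2 ≤ m) (a : ℕ → Bool) (t : ℕ) :
    LYseq m hm a (2 ^ t) =
      (if a (Nat.unpair t).1 = true then (⟨1, by omega⟩ : Fin m) else ⟨0, by omega⟩) := by
  have hlog : Nat.log2 (2 ^ t) = t := by
    rw [Nat.log2_eq_log_two, Nat.log_pow one_lt_two]
  simp [LYseq, hlog]

lemma LYseq_not_pow (m : ℕ) (hm : 2 ≤ m) (a : ℕ → Bool) {n : ℕ}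
    (h : ∀ t, n ≠ 2 ^ t) : LYseq m hm a n = ⟨0, by omega⟩ := by
  have : ¬ (2 ^ Nat.log2 n = n) := fun hc => h _ hc.symm
  simp [LYseq, this]

lemma shiftMap_iter {m : ℕ} (k : ℕ) (x : ℕ → Fin m) (n : ℕ) :
    (shiftMap^[k] x) n = x (n + k) := by
  induction k generalizing x n with
  | zero => rfl
  | succ k ih =>
    rw [Function.iterate_succ_apply, ih]
    simp [shiftMap, Nat.add_assoc]

lemma dist_le_one' {m : ℕ} (x y : ℕ → Fin m) : dist x y ≤ 1 := by
  rcases eq_or_ne x y with rfl | h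
  · simp
  · rw [PiNat.dist_eq_of_ne h]
    exact pow_le_one₀ (by norm_num) (by norm_num)

/-- The shift map is Li–Yorke chaotic on the full shift space. -/
theorem shift_liYorke (m : ℕ) (hm : 2 ≤ m) :
    ∃ S : Set (ℕ → Fin m), ¬ S.Countable ∧
      ∀ x ∈ S, ∀ y ∈ S, x ≠ y →
        Filter.liminf (fun k : ℕ => dist (shiftMap^[k] x) (shiftMap^[k] y)) atTop = 0 ∧
        1 ≤ Filter.limsup (fun k : ℕ => dist (shiftMap^[k] x) (shiftMap^[k] y)) atTop := by
  refine ⟨Set.range (LYseq m hm), ?_, ?_⟩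
  · -- uncountability
    intro hc
    have hinj : Function.Injective (LYseq m hm) := by
      intro a b hab
      funext i
      have := congrFun hab (2 ^ Nat.pair i 0)
      rw [LYseq_pow, LYseq_pow, Nat.unpair_pair] at this
      by_contra hne
      rcases Bool.eq_false_or_eq_true (a i) with ha | ha <;>
        rcases Bool.eq_false_or_eq_true (b i) with hb | hb <;>
          simp_all
    have : Countable (ℕ → Bool) := by
      have h1 : Countable (Set.range (LYseq m hm)) := hc.to_subtype
      exact Function.Injective.countable
        (f := fun a => (⟨LYseq m hm a, Set.mem_range_self a⟩ : Set.range (LYseq m hm)))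
        (fun a b hab => hinj (congrArg Subtype.val hab))
    have hset : Countable (Set ℕ) :=
      Countable.of_equiv _ (Equiv.arrowCongr (Equiv.refl ℕ) Equiv.propEquivBool).symm
    obtain ⟨f, hf⟩ := Countable.exists_injective_nat (Set ℕ)
    exact Function.cantor_injective f hf
  · rintro x ⟨a, rfl⟩ y ⟨b, rfl⟩ hxy
    obtain ⟨i, hi⟩ : ∃ i, a i ≠ b i := by
      by_contra h
      push_neg at h
      exact hxy (congrArg (LYseq m hm) (funext h))
    set x := LYseq m hm a with hx
    set y := LYseq m hm b with hy
    have hbdd : IsBoundedUnder (· ≤ ·) atTop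
        (fun k : ℕ => dist (shiftMap^[k] x) (shiftMap^[k] y)) :=
      Filter.isBoundedUnder_of ⟨1, fun k => dist_le_one' _ _⟩
    have hbdd0 : IsBoundedUnder (· ≥ ·) atTop
        (fun k : ℕ => dist (shiftMap^[k] x) (shiftMap^[k] y)) :=
      Filter.isBoundedUnder_of ⟨0, fun k => dist_nonneg⟩
    constructor
    · -- liminf = 0
      have hfreq : ∀ N : ℕ, ∃ᶠ k in atTop,
          dist (shiftMap^[k] x) (shiftMap^[k] y) ≤ (1 / 2 : ℝ) ^ N := by
        intro N
        rw [Filter.frequently_atTop]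
        intro K
        refine ⟨2 ^ (N + K + 1) + 1, ?_, ?_⟩
        · have : N + K + 1 ≤ 2 ^ (N + K + 1) := Nat.le_of_lt (Nat.lt_two_pow_self (n := _))
          omega
        · set t := N + K + 1
          have hNt : N + 1 ≤ 2 ^ t := by
            have := Nat.lt_two_pow_self (n := t)
            omega
          have key : ∀ j < N, (shiftMap^[2 ^ t + 1] x) j = (shiftMap^[2 ^ t + 1] y) j := by
            intro j hj
            rw [shiftMap_iter, shiftMap_iter, hx, hy]
            have hnp : ∀ s, j + (2 ^ t + 1) ≠ 2 ^ s := by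
              intro s hs
              have h1 : 2 ^ t < 2 ^ s := by omega
              have h2 : 2 ^ s < 2 ^ (t + 1) := by
                have : (2:ℕ) ^ (t+1) = 2 ^ t + 2 ^ t := by ring
                omega
              have ht : t < s := (Nat.pow_lt_pow_iff_right (le_refl 2)).mp h1
              have hs' : s < t + 1 := (Nat.pow_lt_pow_iff_right (le_refl 2)).mp h2
              omega
            rw [LYseq_not_pow m hm a hnp, LYseq_not_pow m hm b hnp]
          rw [show ((1:ℝ)/2) = (1/2 : ℝ) from rfl, ← PiNat.mem_cylinder_iff_dist_le,
            PiNat.mem_cylinder_iff]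
          exact fun j hj => key j hj
      have hle : ∀ N : ℕ, liminf (fun k : ℕ => dist (shiftMap^[k] x) (shiftMap^[k] y)) atTop
          ≤ (1 / 2 : ℝ) ^ N := fun N => liminf_le_of_frequently_le (hfreq N) hbdd0
      have h0 : liminf (fun k : ℕ => dist (shiftMap^[k] x) (shiftMap^[k] y)) atTop ≤ 0 := by
        by_contra h
        push_neg at h
        obtain ⟨N, hN⟩ := exists_pow_lt_of_lt_one h (by norm_num : (1/2 : ℝ) < 1)
        exact absurd (hle N) (not_le.mpr hN)
      refine le_antisymm h0 ?_
      exact Filter.le_liminf_of_le hbdd.isCoboundedUnder_ge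
        (Filter.Eventually.of_forall fun k => dist_nonneg)
    · -- limsup ≥ 1
      have hfreq : ∃ᶠ k in atTop,
          (1:ℝ) ≤ dist (shiftMap^[k] x) (shiftMap^[k] y) := by
        rw [Filter.frequently_atTop]
        intro K
        refine ⟨2 ^ Nat.pair i K, ?_, ?_⟩
        · exact le_trans (Nat.right_le_pair i K) (Nat.le_of_lt (Nat.lt_two_pow_self (n := _)))
        · set k := 2 ^ Nat.pair i K
          have h0 : (shiftMap^[k] x) 0 ≠ (shiftMap^[k] y) 0 := by
            rw [shiftMap_iter, shiftMap_iter, hx, hy]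
            show LYseq m hm a (0 + k) ≠ LYseq m hm b (0 + k)
            rw [Nat.zero_add, LYseq_pow, LYseq_pow, Nat.unpair_pair]
            rcases Bool.eq_false_or_eq_true (a i) with ha | ha <;>
              rcases Bool.eq_false_or_eq_true (b i) with hb | hb <;>
                simp_all
          have hne : shiftMap^[k] x ≠ shiftMap^[k] y := fun h => h0 (congrFun h 0)
          have hfd : PiNat.firstDiff (shiftMap^[k] x) (shiftMap^[k] y) = 0 := by
            by_contra h
            exact h0 (PiNat.apply_eq_of_lt_firstDiff (Nat.pos_of_ne_zero h))
          rw [PiNat.dist_eq_of_ne hne, hfd, pow_zero]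
      exact Filter.le_limsup_of_frequently_le hfreq hbdd
end
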